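/- arXiv:1606.04021 — 6 statements merged into one kernel-verified Lean document; each statement's English description precedes it below -/
import Mathlib

section
/- Let G be a finite chordal simple graph with vertex set V and let O be a finite nonempty set. Suppose that for every maximal clique C of G a probability distribution p_C on the set of functions C → O is given, and that for any two maximal cliques C and D of G the marginal of p_C on C ∩ D equals the marginal of p_D on C ∩ D. Then there exists a probability distribution P on the set of functions V → O whose marginal on every maximal clique C equals p_C. -/
/-!
Extend `p` to every clique `K` as the marginal on `K` of `p D` for any maximal clique `D ⊇ K`;
the compatibility hypothesis makes this independent of `D` and stable under marginalisation.
Then, by strong induction on a vertex set `S`, build a distribution on `S → O` with the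
prescribed marginal on every clique inside `S`. A clique `S` carries its own distribution.
Otherwise `S` splits into proper parts `S₁, S₂` meeting in a clique, with every clique of `S`
inside one of them: for nonadjacent `a, b ∈ S`, take `S₁` to be the component `C` of `a` in `S`
minus the closed neighbourhood of `b`, together with the neighbours of `b` adjacent to `C`, and
`S₂ = S \ C`. Those neighbours form a clique, because a shortest path through `C` joining two
nonadjacent ones would close up through `b` into a chordless cycle. The distributions on `S₁` and
`S₂` agree on the clique `S₁ ∩ S₂`, and their conditionally independent coupling has both of them
as marginals.
-/

/-- A finite simple graph is *chordal* if every cycle of length at least 4 has a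
chord, i.e. an edge of the graph joining two vertices of the cycle that are not
consecutive on the cycle. -/
def SimpleGraph.IsChordal {W : Type*} (G : SimpleGraph W) : Prop :=
  ∀ (v : W) (c : G.Walk v v), c.IsCycle → 4 ≤ c.length →
    ∃ u w : W, u ∈ c.support ∧ w ∈ c.support ∧ G.Adj u w ∧ ¬ c.toSubgraph.Adj u w

/-- A maximal clique of a graph: a clique contained in no strictly larger clique. -/
def SimpleGraph.IsMaxClique {W : Type*} (G : SimpleGraph W) (C : Finset W) : Prop :=
  G.IsClique (C : Set W) ∧ ∀ D : Finset W, G.IsClique (D : Set W) → C ⊆ D → D = C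

open Finset

section Pushforward

variable {α β γ : Type*} [Fintype α]

open Classical in
noncomputable def pushforward (r : α → β) (q : α → ℝ) (b : β) : ℝ :=
  ∑ a with r a = b, q a

lemma pushforward_apply [DecidableEq β] (r : α → β) (q : α → ℝ) (b : β) :
    pushforward r q b = ∑ a, if r a = b then q a else 0 := by
  classical
  rw [pushforward, sum_filter]
  congr!

lemma pushforward_nonneg {r : α → β} {q : α → ℝ} (hq : ∀ a, 0 ≤ q a) (b : β) :
    0 ≤ pushforward r q b :=
  sum_nonneg fun a _ => hq a

lemma le_pushforward_apply {r : α → β} {q : α → ℝ} (hq : ∀ a, 0 ≤ q a) (a : α) :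
    q a ≤ pushforward r q (r a) :=
  single_le_sum (fun a _ => hq a) (by simp)

lemma sum_pushforward [Fintype β] (r : α → β) (q : α → ℝ) :
    ∑ b, pushforward r q b = ∑ a, q a := by
  classical
  simp only [pushforward]
  convert sum_fiberwise univ r q

lemma pushforward_mem_stdSimplex [Fintype β] (r : α → β) {q : α → ℝ}
    (hq : q ∈ stdSimplex ℝ α) : pushforward r q ∈ stdSimplex ℝ β :=
  ⟨pushforward_nonneg hq.1, (sum_pushforward r q).trans hq.2⟩

lemma pushforward_pushforward [Fintype β] (r : α → β) (r' : β → γ) (q : α → ℝ) :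
    pushforward r' (pushforward r q) = pushforward (r' ∘ r) q := by
  classical
  funext c
  simp only [pushforward_apply, Function.comp_apply]
  rw [← sum_fiberwise univ r (fun a => if r' (r a) = c then q a else 0)]
  refine sum_congr rfl fun b _ => ?_
  rw [sum_filter]
  split_ifs with h
  · exact sum_congr rfl fun a _ => by split_ifs <;> simp_all
  · exact (sum_eq_zero fun a _ => by split_ifs <;> simp_all).symm

lemma pushforward_id (q : α → ℝ) : pushforward id q = q := by
  classical
  funext a
  simp [pushforward_apply]

lemma pushforward_comp_of_bijective {α' : Type*} [Fintype α'] {e : α' → α}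
    (he : e.Bijective) (r : α → β) (q : α → ℝ) :
    pushforward (r ∘ e) (q ∘ e) = pushforward r q := by
  classical
  funext b
  simp only [pushforward_apply, Function.comp_apply]
  exact he.sum_comp (fun a => if r a = b then q a else 0)

lemma pushforward_comp_mul (r : α → β) (f : β → ℝ) (q : α → ℝ) (b : β) :
    pushforward r (fun a => f (r a) * q a) b = f b * pushforward r q b := by
  classical
  simp only [pushforward_apply, mul_sum]
  exact sum_congr rfl fun a _ => by split_ifs with h <;> simp [h]

lemma pushforward_apply_eq_sum_ite_forall {ι O : Type*} [Fintype ι] [DecidableEq O]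
    (r : α → ι → O) (q : α → ℝ) (g : ι → O) :
    pushforward r q g = ∑ a, if ∀ i, r a i = g i then q a else 0 := by
  rw [pushforward_apply]
  exact sum_congr rfl fun a _ => if_congr funext_iff rfl rfl

end Pushforward

section Glue

variable {X A B M : Type*}

structure IsFiberProduct (rA : X → A) (rB : X → B) (πA : A → M) (πB : B → M) : Prop where
  comm : ∀ x, πA (rA x) = πB (rB x)
  existsUnique : ∀ a b, πA a = πB b → ∃! x, rA x = a ∧ rB x = b

variable {rA : X → A} {rB : X → B} {πA : A → M} {πB : B → M}

lemma IsFiberProduct.symm (h : IsFiberProduct rA rB πA πB) : IsFiberProduct rB rA πB πA where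
  comm x := (h.comm x).symm
  existsUnique b a hab := by simpa only [and_comm] using h.existsUnique a b hab.symm

lemma IsFiberProduct.pushforward_comp [Fintype X] [Fintype B] (h : IsFiberProduct rA rB πA πB)
    (PB : B → ℝ) (a : A) :
    pushforward rA (fun x => PB (rB x)) a = pushforward πB PB (πA a) := by
  classical
  simp only [pushforward]
  refine sum_bij (fun x _ => rB x) (fun x hx => ?_) (fun x hx y hy hxy => ?_) (fun b hb => ?_)
    (fun _ _ => rfl)
  · simp only [mem_filter, mem_univ, true_and] at hx ⊢
    rw [← hx, h.comm]
  · simp only [mem_filter, mem_univ, true_and] at hx hy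
    exact (h.existsUnique a (rB x) (by rw [← hx, h.comm])).unique ⟨hx, rfl⟩ ⟨hy, hxy.symm⟩
  · simp only [mem_filter, mem_univ, true_and] at hb ⊢
    obtain ⟨x, ⟨hxa, hxb⟩, -⟩ := h.existsUnique a b hb.symm
    exact ⟨x, hxa, hxb⟩

variable [Fintype A]

/-- The conditionally independent coupling `PA a * PB b / m (πA a)` of `PA` and `PB` over their
common marginal `m`; where `m` vanishes so does `PA`, and `x / 0 = 0` gives the right value. -/
noncomputable def glue (rA : X → A) (rB : X → B) (πA : A → M) (PA : A → ℝ) (PB : B → ℝ)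
    (x : X) : ℝ :=
  PA (rA x) / pushforward πA PA (πA (rA x)) * PB (rB x)

variable [Fintype B] {PA : A → ℝ} {PB : B → ℝ}

lemma IsFiberProduct.glue_comm (h : IsFiberProduct rA rB πA πB)
    (hm : pushforward πA PA = pushforward πB PB) :
    glue rA rB πA PA PB = glue rB rA πB PB PA := by
  funext x
  rw [glue, glue, h.comm, hm, div_mul_eq_mul_div, div_mul_eq_mul_div, mul_comm]

variable [Fintype X]

lemma IsFiberProduct.pushforward_glue (h : IsFiberProduct rA rB πA πB) (hPA : ∀ a, 0 ≤ PA a)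
    (hm : pushforward πA PA = pushforward πB PB) :
    pushforward rA (glue rA rB πA PA PB) = PA := by
  funext a
  unfold glue
  rw [pushforward_comp_mul rA (fun a => PA a / pushforward πA PA (πA a)), h.pushforward_comp,
    ← hm]
  exact div_mul_cancel_of_imp fun h0 => le_antisymm (h0 ▸ le_pushforward_apply hPA a) (hPA a)

lemma IsFiberProduct.glue_mem_stdSimplex (h : IsFiberProduct rA rB πA πB)
    (hPA : PA ∈ stdSimplex ℝ A) (hPB : ∀ b, 0 ≤ PB b)
    (hm : pushforward πA PA = pushforward πB PB) :
    glue rA rB πA PA PB ∈ stdSimplex ℝ X := by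
  refine ⟨fun x => mul_nonneg (div_nonneg (hPA.1 _) (pushforward_nonneg hPA.1 _)) (hPB _), ?_⟩
  rw [← sum_pushforward rA, h.pushforward_glue hPA.1 hm, hPA.2]

end Glue

section Restrict

variable {V O : Type*} [DecidableEq V] {S S₁ S₂ : Finset V}

lemma isFiberProduct_restrict₂ (h₁ : S₁ ⊆ S) (h₂ : S₂ ⊆ S) (hS : S ⊆ S₁ ∪ S₂) :
    IsFiberProduct (restrict₂ (π := fun _ => O) h₁) (restrict₂ (π := fun _ => O) h₂)
      (restrict₂ (π := fun _ => O) inter_subset_left)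
      (restrict₂ (π := fun _ => O) inter_subset_right) where
  comm _ := rfl
  existsUnique f₁ f₂ h := by
    refine ⟨fun i => if hi : i.1 ∈ S₁ then f₁ ⟨i, hi⟩
      else f₂ ⟨i, (mem_union.mp (hS i.2)).resolve_left hi⟩, ⟨?_, ?_⟩, ?_⟩
    · funext i
      simp [i.2]
    · funext i
      by_cases hi : i.1 ∈ S₁
      · simpa [hi] using congrFun h ⟨i, mem_inter.mpr ⟨hi, i.2⟩⟩
      · simp [hi]
    · rintro f ⟨rfl, rfl⟩
      funext i
      by_cases hi : i.1 ∈ S₁ <;> simp [hi]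

theorem exists_mem_stdSimplex_pushforward_restrict₂_eq [Fintype O] (h₁ : S₁ ⊆ S)
    (h₂ : S₂ ⊆ S) (hS : S ⊆ S₁ ∪ S₂) {P₁ : (S₁ → O) → ℝ} {P₂ : (S₂ → O) → ℝ}
    (hP₁ : P₁ ∈ stdSimplex ℝ (S₁ → O)) (hP₂ : P₂ ∈ stdSimplex ℝ (S₂ → O))
    (hm : pushforward (restrict₂ (π := fun _ => O) inter_subset_left) P₁
      = pushforward (restrict₂ (π := fun _ => O) inter_subset_right) P₂) :
    ∃ P ∈ stdSimplex ℝ (S → O),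
      pushforward (restrict₂ (π := fun _ => O) h₁) P = P₁ ∧
        pushforward (restrict₂ (π := fun _ => O) h₂) P = P₂ := by
  have h := isFiberProduct_restrict₂ (O := O) h₁ h₂ hS
  refine ⟨_, h.glue_mem_stdSimplex hP₁ hP₂.1 hm, h.pushforward_glue hP₁.1 hm, ?_⟩
  rw [h.glue_comm hm]
  exact h.symm.pushforward_glue hP₂.1 hm.symm

end Restrict

namespace SimpleGraph

variable {V : Type*} {G : SimpleGraph V}

namespace Walk

variable {x y : V}

lemma exists_isPath_forall_length_le {P : V → Prop} (p : G.Walk x y)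
    (hp : ∀ z ∈ p.support, P z) :
    ∃ q : G.Walk x y, q.IsPath ∧ (∀ z ∈ q.support, P z) ∧
      ∀ r : G.Walk x y, (∀ z ∈ r.support, P z) → q.length ≤ r.length := by
  classical
  have hex : ∃ n, ∃ q : G.Walk x y, (∀ z ∈ q.support, P z) ∧ q.length = n := ⟨_, p, hp, rfl⟩
  obtain ⟨q, hq, hqn⟩ := Nat.find_spec hex
  refine ⟨q.bypass, q.bypass_isPath, fun z hz => hq z (q.support_bypass_subset_support hz),
    fun r hr => ?_⟩
  calc q.bypass.length ≤ q.length := q.length_bypass_le_length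
    _ = Nat.find hex := hqn
    _ ≤ r.length := Nat.find_min' hex ⟨r, hr, rfl⟩

lemma mk_mem_edges_of_forall_length_le {p : G.Walk x y}
    (hp : ∀ q : G.Walk x y, (∀ z ∈ q.support, z ∈ p.support) → p.length ≤ q.length)
    {u w : V} (hu : u ∈ p.support) (hw : w ∈ p.support) (h : G.Adj u w) :
    s(u, w) ∈ p.edges := by
  have key : ∀ i j, i < j → j ≤ p.length → G.Adj (p.getVert i) (p.getVert j) →
      s(p.getVert i, p.getVert j) ∈ p.edges := by
    intro i j hij hj h
    obtain rfl : j = i + 1 := by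
      by_contra hne
      have hsub : ∀ z ∈ ((p.take i).append (.cons h (p.drop j))).support, z ∈ p.support := by
        intro z hz
        rw [mem_support_append_iff, support_cons, List.mem_cons] at hz
        rcases hz with hz | rfl | hz
        · exact (p.isSubwalk_take i).support_subset hz
        · exact p.getVert_mem_support i
        · exact (p.isSubwalk_drop j).support_subset hz
      have := hp _ hsub
      simp only [length_append, take_length, length_cons, drop_length] at this
      omega
    exact (mk_mem_edges_iff_exists p).mpr ⟨i, by omega, rfl⟩
  obtain ⟨i, rfl, hi⟩ := mem_support_iff_exists_getVert.mp hu
  obtain ⟨j, rfl, hj⟩ := mem_support_iff_exists_getVert.mp hw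
  rcases lt_trichotomy i j with hij | rfl | hji
  · exact key i j hij hj h
  · exact absurd rfl h.ne
  · exact Sym2.eq_swap ▸ key j i hji hi h.symm

lemma IsPath.cons_concat_isCycle {b : V} {q : G.Walk x y} (hq : q.IsPath) (hbq : b ∉ q.support)
    (hxy : x ≠ y) (hbx : G.Adj b x) (hyb : G.Adj y b) : (cons hbx (q.concat hyb)).IsCycle := by
  refine (cons_isCycle_iff _ hbx).mpr ⟨hq.concat hbq _, fun he => ?_⟩
  rw [edges_concat, List.concat_eq_append, List.mem_append, List.mem_singleton] at he
  rcases he with he | he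
  · exact hbq (q.fst_mem_support_of_mem_edges he)
  · rcases Sym2.eq_iff.mp he with ⟨rfl, -⟩ | ⟨-, rfl⟩
    exacts [G.irrefl hyb, hxy rfl]

end Walk

theorem IsChordal.adj_of_walk {b x y : V} {C : Set V} (hG : G.IsChordal) (hbx : G.Adj b x)
    (hby : G.Adj b y) (hxy : x ≠ y) (hbC : b ∉ C) (hC : ∀ z ∈ C, ¬ G.Adj b z)
    (p : G.Walk x y) (hp : ∀ z ∈ p.support, z = x ∨ z = y ∨ z ∈ C) : G.Adj x y := by
  by_contra hnxy
  obtain ⟨q, hq, hqC, hmin⟩ := p.exists_isPath_forall_length_le hp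
  have hbq : b ∉ q.support := fun hb => by
    rcases hqC b hb with rfl | rfl | hb
    exacts [G.irrefl hbx, G.irrefl hby, hbC hb]
  have hlen : 2 ≤ q.length := by
    by_contra! hlt
    interval_cases h : q.length
    · exact hxy (Walk.eq_of_length_eq_zero h)
    · exact hnxy (Walk.adj_of_length_eq_one h)
  set c := Walk.cons hbx (q.concat hby.symm)
  have hcq {u w} (he : s(u, w) ∈ q.edges) : c.toSubgraph.Adj u w := by
    rw [Walk.adj_toSubgraph_iff_mem_edges, Walk.edges_cons, Walk.edges_concat]
    simp [he]
  have hcb {w} (hw : w ∈ q.support) (hbw : G.Adj b w) : c.toSubgraph.Adj b w := by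
    rw [Walk.adj_toSubgraph_iff_mem_edges, Walk.edges_cons, Walk.edges_concat]
    rcases hqC _ hw with rfl | rfl | hw
    exacts [by simp, by simp [Sym2.eq_swap], absurd hbw (hC _ hw)]
  have hmin' (r : G.Walk x y) (hr : ∀ z ∈ r.support, z ∈ q.support) : q.length ≤ r.length :=
    hmin r fun z hz => hqC z (hr z hz)
  obtain ⟨u, w, hu, hw, huw, hnot⟩ := hG b c (hq.cons_concat_isCycle hbq hxy hbx hby.symm)
    (by simp only [c, Walk.length_cons, Walk.length_concat]; omega)
  simp only [c, Walk.support_cons, Walk.support_concat, List.mem_cons, List.mem_append,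
    List.not_mem_nil, or_false] at hu hw
  rcases hu with rfl | hu | rfl <;> rcases hw with rfl | hw | rfl
  all_goals first
    | exact G.irrefl huw
    | exact hnot (hcb hw huw)
    | exact hnot (hcb hu huw.symm).symm
    | exact hnot (hcq (Walk.mk_mem_edges_of_forall_length_le hmin' hu hw huw))

def walkComponent (G : SimpleGraph V) (T : Set V) (a : V) : Set V :=
  {z | ∃ p : G.Walk a z, ∀ v ∈ p.support, v ∈ T}

section walkComponent

variable {T : Set V} {a : V}

lemma walkComponent_subset : G.walkComponent T a ⊆ T :=
  fun z ⟨p, hp⟩ => hp z p.end_mem_support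

lemma mem_walkComponent_self (ha : a ∈ T) : a ∈ G.walkComponent T a :=
  ⟨.nil, by simpa using ha⟩

lemma mem_walkComponent_of_adj {z w : V} (hz : z ∈ G.walkComponent T a) (hw : w ∈ T)
    (hzw : G.Adj z w) : w ∈ G.walkComponent T a := by
  obtain ⟨p, hp⟩ := hz
  refine ⟨p.concat hzw, fun v hv => ?_⟩
  rw [Walk.support_concat, List.mem_append, List.mem_singleton] at hv
  exact hv.elim (hp v) (· ▸ hw)

theorem IsChordal.isClique_of_walkComponent (hG : G.IsChordal) {b : V}
    (hT : ∀ z ∈ T, z ≠ b ∧ ¬ G.Adj b z) :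
    G.IsClique {w | G.Adj b w ∧ ∃ z ∈ G.walkComponent T a, G.Adj z w} := by
  rintro x ⟨hbx, z₁, ⟨w₁, hw₁⟩, hzx⟩ y ⟨hby, z₂, ⟨w₂, hw₂⟩, hzy⟩ hxy
  refine hG.adj_of_walk (C := T) hbx hby hxy (fun h => (hT b h).1 rfl) (fun z hz => (hT z hz).2)
    (.cons hzx.symm ((w₁.reverse.append w₂).concat hzy)) fun z hz => ?_
  simp only [Walk.support_cons, Walk.support_concat, Walk.mem_support_append_iff,
    Walk.support_reverse, List.mem_cons, List.mem_append, List.mem_reverse,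
    List.not_mem_nil, or_false] at hz
  rcases hz with rfl | (hz | hz) | rfl
  exacts [Or.inl rfl, Or.inr (Or.inr (hw₁ z hz)), Or.inr (Or.inr (hw₂ z hz)), Or.inr (Or.inl rfl)]

end walkComponent

structure IsCliqueSeparation [DecidableEq V] (G : SimpleGraph V) (S S₁ S₂ : Finset V) :
    Prop where
  left_ssubset : S₁ ⊂ S
  right_ssubset : S₂ ⊂ S
  subset_union : S ⊆ S₁ ∪ S₂
  isClique_inter : G.IsClique ((S₁ ∩ S₂ : Finset V) : Set V)
  subset_or_subset : ∀ K ⊆ S, G.IsClique (K : Set V) → K ⊆ S₁ ∨ K ⊆ S₂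

theorem IsChordal.exists_isCliqueSeparation [DecidableEq V] (hG : G.IsChordal) {S : Finset V}
    (hS : ¬ G.IsClique (S : Set V)) : ∃ S₁ S₂, G.IsCliqueSeparation S S₁ S₂ := by
  classical
  obtain ⟨a, ha, b, hb, hab, hnab⟩ : ∃ a ∈ S, ∃ b ∈ S, a ≠ b ∧ ¬ G.Adj a b := by
    simpa [IsClique, Set.Pairwise] using hS
  set T : Set V := {z | z ∈ S ∧ z ≠ b ∧ ¬ G.Adj b z}
  set C := {z ∈ S | z ∈ G.walkComponent T a}
  set Sep := {w ∈ S | G.Adj b w ∧ ∃ z ∈ G.walkComponent T a, G.Adj z w}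
  have hCT {z} (hz : z ∈ C) : z ∈ T := walkComponent_subset (mem_filter.mp hz).2
  have haC : a ∈ C :=
    mem_filter.mpr ⟨ha, mem_walkComponent_self ⟨ha, hab, fun h => hnab h.symm⟩⟩
  have hSep : G.IsClique (Sep : Set V) :=
    (hG.isClique_of_walkComponent fun z hz => hz.2).subset fun w hw => (mem_filter.mp hw).2
  refine ⟨C ∪ Sep, S \ C, ?_, ?_, fun z hz => ?_, hSep.subset fun z hz => ?_,
    fun K hKS hK => ?_⟩
  · refine (ssubset_iff_of_subset (union_subset (filter_subset _ _) (filter_subset _ _))).mpr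
      ⟨b, hb, fun h => ?_⟩
    rcases mem_union.mp h with h | h
    exacts [(hCT h).2.1 rfl, G.irrefl (mem_filter.mp h).2.1]
  · exact (ssubset_iff_of_subset sdiff_subset).mpr ⟨a, ha, fun h => (mem_sdiff.mp h).2 haC⟩
  · by_cases hzC : z ∈ C
    exacts [mem_union_left _ (mem_union_left _ hzC), mem_union_right _ (mem_sdiff.mpr ⟨hz, hzC⟩)]
  · obtain ⟨hz₁, hz₂⟩ := mem_inter.mp hz
    exact (mem_union.mp hz₁).resolve_left (mem_sdiff.mp hz₂).2
  · by_cases hKC : ∃ z ∈ K, z ∈ C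
    · obtain ⟨z, hzK, hzC⟩ := hKC
      refine Or.inl fun w hwK => ?_
      obtain rfl | hzw := eq_or_ne z w
      · exact mem_union_left _ hzC
      have hadj : G.Adj z w := hK hzK hwK hzw
      by_cases hwT : w ∈ T
      · exact mem_union_left _ (mem_filter.mpr
          ⟨hKS hwK, mem_walkComponent_of_adj (mem_filter.mp hzC).2 hwT hadj⟩)
      refine mem_union_right _ (mem_filter.mpr ⟨hKS hwK, ?_, z, (mem_filter.mp hzC).2, hadj⟩)
      by_contra hbw
      exact hwT ⟨hKS hwK, fun h => (hCT hzC).2.2 (h ▸ hadj.symm), hbw⟩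
    · exact Or.inr fun w hwK => mem_sdiff.mpr ⟨hKS hwK, fun hwC => hKC ⟨w, hwK, hwC⟩⟩

end SimpleGraph

section JointDistribution

variable {V O : Type*} [DecidableEq V] [Fintype O] {G : SimpleGraph V}
  {q : (K : Finset V) → (K → O) → ℝ}

theorem SimpleGraph.IsChordal.exists_joint_distribution_on (hG : G.IsChordal)
    (hq : ∀ K : Finset V, G.IsClique (K : Set V) → q K ∈ stdSimplex ℝ (K → O))
    (hproj : ∀ {K L : Finset V} (h : K ⊆ L), G.IsClique (L : Set V) →
      pushforward (restrict₂ (π := fun _ => O) h) (q L) = q K)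
    (S : Finset V) :
    ∃ P ∈ stdSimplex ℝ (S → O), ∀ K (h : K ⊆ S), G.IsClique (K : Set V) →
      pushforward (restrict₂ (π := fun _ => O) h) P = q K := by
  induction S using Finset.strongInduction with | H S ih =>
  by_cases hS : G.IsClique (S : Set V)
  · exact ⟨q S, hq S hS, fun K h _ => hproj h hS⟩
  obtain ⟨S₁, S₂, hsep⟩ := hG.exists_isCliqueSeparation hS
  obtain ⟨P₁, hP₁, hm₁⟩ := ih S₁ hsep.left_ssubset
  obtain ⟨P₂, hP₂, hm₂⟩ := ih S₂ hsep.right_ssubset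
  obtain ⟨P, hP, hPP₁, hPP₂⟩ := exists_mem_stdSimplex_pushforward_restrict₂_eq
    hsep.left_ssubset.subset hsep.right_ssubset.subset hsep.subset_union hP₁ hP₂
    ((hm₁ _ inter_subset_left hsep.isClique_inter).trans
      (hm₂ _ inter_subset_right hsep.isClique_inter).symm)
  refine ⟨P, hP, fun K hKS hKc => ?_⟩
  rcases hsep.subset_or_subset K hKS hKc with hK₁ | hK₂
  · rw [← hm₁ K hK₁ hKc, ← hPP₁, pushforward_pushforward]
    rfl
  · rw [← hm₂ K hK₂ hKc, ← hPP₂, pushforward_pushforward]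
    rfl

theorem SimpleGraph.IsChordal.exists_joint_distribution [Fintype V] (hG : G.IsChordal)
    (hq : ∀ K : Finset V, G.IsClique (K : Set V) → q K ∈ stdSimplex ℝ (K → O))
    (hproj : ∀ {K L : Finset V} (h : K ⊆ L), G.IsClique (L : Set V) →
      pushforward (restrict₂ (π := fun _ => O) h) (q L) = q K) :
    ∃ P ∈ stdSimplex ℝ (V → O), ∀ K : Finset V, G.IsClique (K : Set V) →
      pushforward (Finset.restrict (π := fun _ => O) K) P = q K := by
  obtain ⟨P, hP, hPK⟩ := hG.exists_joint_distribution_on hq hproj univ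
  have he : Function.Bijective (univ.restrict (π := fun _ : V => O)) :=
    ⟨fun f f' h => funext fun x => congrFun h ⟨x, mem_univ x⟩,
      fun g => ⟨fun x => g ⟨x, mem_univ x⟩, rfl⟩⟩
  refine ⟨P ∘ univ.restrict, ⟨fun f => hP.1 _, by rw [← hP.2]; exact he.sum_comp P⟩,
    fun K hK => ?_⟩
  rw [← hPK K (subset_univ K) hK, ← pushforward_comp_of_bijective he]
  rfl

end JointDistribution

section MaxClique

variable {V O : Type*} {G : SimpleGraph V}

lemma SimpleGraph.IsClique.exists_isMaxClique_superset [Fintype V] {K : Finset V}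
    (hK : G.IsClique (K : Set V)) : ∃ D, G.IsMaxClique D ∧ K ⊆ D := by
  classical
  obtain ⟨D, hKD, hD⟩ := exists_le_maximal ({D | G.IsClique (D : Set V)} : Finset (Finset V))
    (by simpa using hK)
  exact ⟨D, ⟨(mem_filter.mp hD.1).2,
    fun E hE hDE => le_antisymm (hD.2 (by simpa using hE) hDE) hDE⟩, hKD⟩

variable [DecidableEq V] [Fintype O] {p : (C : Finset V) → (C → O) → ℝ}

def SimpleGraph.MaxCliqueConsistent (G : SimpleGraph V) (p : (C : Finset V) → (C → O) → ℝ) :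
    Prop :=
  ∀ C D, G.IsMaxClique C → G.IsMaxClique D →
    pushforward (restrict₂ (π := fun _ => O) inter_subset_left) (p C)
      = pushforward (restrict₂ (π := fun _ => O) inter_subset_right) (p D)

noncomputable def SimpleGraph.cliqueMarginal (G : SimpleGraph V)
    (p : (C : Finset V) → (C → O) → ℝ) (K : Finset V) : (K → O) → ℝ :=
  open Classical in
  if h : ∃ D, G.IsMaxClique D ∧ K ⊆ D then
    pushforward (restrict₂ (π := fun _ => O) h.choose_spec.2) (p h.choose)
  else 0

namespace SimpleGraph.MaxCliqueConsistent

variable (hp : G.MaxCliqueConsistent p)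
include hp

lemma pushforward_restrict₂_eq {K D D' : Finset V} (hD : G.IsMaxClique D)
    (hD' : G.IsMaxClique D') (hKD : K ⊆ D) (hKD' : K ⊆ D') :
    pushforward (restrict₂ (π := fun _ => O) hKD) (p D)
      = pushforward (restrict₂ (π := fun _ => O) hKD') (p D') := by
  have hK : K ⊆ D ∩ D' := subset_inter hKD hKD'
  calc _ = pushforward (restrict₂ (π := fun _ => O) hK)
          (pushforward (restrict₂ (π := fun _ => O) inter_subset_left) (p D)) := by
        rw [pushforward_pushforward]; rfl
    _ = pushforward (restrict₂ (π := fun _ => O) hK)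
          (pushforward (restrict₂ (π := fun _ => O) inter_subset_right) (p D')) := by
        rw [hp D D' hD hD']
    _ = _ := by rw [pushforward_pushforward]; rfl

lemma cliqueMarginal_eq {K D : Finset V} (hD : G.IsMaxClique D) (hKD : K ⊆ D) :
    G.cliqueMarginal p K = pushforward (restrict₂ (π := fun _ => O) hKD) (p D) := by
  have h : ∃ D, G.IsMaxClique D ∧ K ⊆ D := ⟨D, hD, hKD⟩
  rw [cliqueMarginal, dif_pos h]
  exact hp.pushforward_restrict₂_eq h.choose_spec.1 hD _ _

lemma cliqueMarginal_of_isMaxClique {C : Finset V} (hC : G.IsMaxClique C) :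
    G.cliqueMarginal p C = p C := by
  rw [hp.cliqueMarginal_eq hC subset_rfl]
  exact pushforward_id _

variable [Fintype V]

lemma cliqueMarginal_mem_stdSimplex (hp₁ : ∀ C, G.IsMaxClique C → p C ∈ stdSimplex ℝ (C → O))
    (K : Finset V) (hK : G.IsClique (K : Set V)) :
    G.cliqueMarginal p K ∈ stdSimplex ℝ (K → O) := by
  obtain ⟨D, hD, hKD⟩ := hK.exists_isMaxClique_superset
  rw [hp.cliqueMarginal_eq hD hKD]
  exact pushforward_mem_stdSimplex _ (hp₁ D hD)

lemma pushforward_cliqueMarginal {K L : Finset V} (h : K ⊆ L) (hL : G.IsClique (L : Set V)) :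
    pushforward (restrict₂ (π := fun _ => O) h) (G.cliqueMarginal p L)
      = G.cliqueMarginal p K := by
  obtain ⟨D, hD, hLD⟩ := hL.exists_isMaxClique_superset
  rw [hp.cliqueMarginal_eq hD hLD, hp.cliqueMarginal_eq hD (h.trans hLD), pushforward_pushforward]
  rfl

end SimpleGraph.MaxCliqueConsistent

end MaxClique

theorem chordal_joint_distribution_general
    {V O : Type*} [Fintype V] [DecidableEq V] [Fintype O] [DecidableEq O]
    (G : SimpleGraph V) (hG : G.IsChordal)
    (p : (C : Finset V) → (C → O) → ℝ)
    (hnonneg : ∀ C : Finset V, G.IsMaxClique C → ∀ f : C → O, 0 ≤ p C f)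
    (hnorm : ∀ C : Finset V, G.IsMaxClique C → ∑ f : C → O, p C f = 1)
    (hcompat : ∀ C D : Finset V, G.IsMaxClique C → G.IsMaxClique D →
      ∀ g : (C ∩ D : Finset V) → O,
        (∑ f : C → O,
          if ∀ x : (C ∩ D : Finset V), f ⟨x.1, (Finset.mem_inter.mp x.2).1⟩ = g x
            then p C f else 0)
        = ∑ f : D → O,
            if ∀ x : (C ∩ D : Finset V), f ⟨x.1, (Finset.mem_inter.mp x.2).2⟩ = g x
              then p D f else 0) :
    ∃ P : (V → O) → ℝ, (∀ f, 0 ≤ P f) ∧ (∑ f, P f = 1) ∧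
      ∀ C : Finset V, G.IsMaxClique C → ∀ g : C → O,
        p C g = ∑ f : V → O, if (∀ x : C, f x.1 = g x) then P f else 0 := by
  have hp : G.MaxCliqueConsistent p := fun C D hC hD => funext fun g => by
    rw [pushforward_apply_eq_sum_ite_forall, pushforward_apply_eq_sum_ite_forall]
    exact hcompat C D hC hD g
  obtain ⟨P, hP, hPK⟩ := hG.exists_joint_distribution
    (hp.cliqueMarginal_mem_stdSimplex fun C hC => ⟨hnonneg C hC, hnorm C hC⟩)
    hp.pushforward_cliqueMarginal
  refine ⟨P, hP.1, hP.2, fun C hC g => ?_⟩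
  rw [← hp.cliqueMarginal_of_isMaxClique hC, ← hPK C hC.1,
    pushforward_apply_eq_sum_ite_forall]
  rfl

/-- Let `G` be a finite chordal graph and `O` a finite nonempty
outcome set. Given a probability distribution `p C` on `C → O` for every maximal
clique `C`, such that any two of them have equal marginals on the intersection of
the corresponding cliques, there is a joint probability distribution `P` on
`V → O` whose marginal on every maximal clique `C` is `p C`. -/
theorem chordal_joint_distribution
    {V O : Type*} [Fintype V] [DecidableEq V] [Fintype O] [DecidableEq O]
    [Nonempty O] (G : SimpleGraph V) (hG : G.IsChordal)
    (p : (C : Finset V) → (C → O) → ℝ)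
    (hnonneg : ∀ C : Finset V, G.IsMaxClique C → ∀ f : C → O, 0 ≤ p C f)
    (hnorm : ∀ C : Finset V, G.IsMaxClique C → ∑ f : C → O, p C f = 1)
    (hcompat : ∀ C D : Finset V, G.IsMaxClique C → G.IsMaxClique D →
      ∀ g : (C ∩ D : Finset V) → O,
        (∑ f : C → O,
          if ∀ x : (C ∩ D : Finset V), f ⟨x.1, (Finset.mem_inter.mp x.2).1⟩ = g x
            then p C f else 0)
        = ∑ f : D → O,
            if ∀ x : (C ∩ D : Finset V), f ⟨x.1, (Finset.mem_inter.mp x.2).2⟩ = g x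
              then p D f else 0) :
    ∃ P : (V → O) → ℝ, (∀ f, 0 ≤ P f) ∧ (∑ f, P f = 1) ∧
      ∀ C : Finset V, G.IsMaxClique C → ∀ g : C → O,
        p C g = ∑ f : V → O, if (∀ x : C, f x.1 = g x) then P f else 0 :=
  chordal_joint_distribution_general G hG p hnonneg hnorm hcompat
end

section
/- For every integer n ≥ 2 and every assignment a : {1,…,n} → {−1,+1}, one has Σ_{i=1}^{n−1} a(i)a(i+1) − a(n)a(1) ≤ n − 2. -/
/-!
The `n` numbers `a i * a (i + 1)` (`1 ≤ i < n`) and `-(a n * a 1)` are all `±1`, and their product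
is `-1` because every `a i` occurs in it exactly twice. Hence at least one of them is `-1`, and
their sum is at most `(n - 1) - 1 = n - 2`.
-/

open Finset

theorem Int.le_one_of_isUnit {u : ℤ} (hu : IsUnit u) : u ≤ 1 := by
  rcases Int.isUnit_eq_one_or hu with h | h <;> omega

theorem Finset.sum_le_card_of_forall_isUnit {ι : Type*} (s : Finset ι) (f : ι → ℤ)
    (hf : ∀ i ∈ s, IsUnit (f i)) : ∑ i ∈ s, f i ≤ #s := by
  simpa only [nsmul_eq_mul, mul_one] using
    sum_le_card_nsmul s f 1 fun i hi => Int.le_one_of_isUnit (hf i hi)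

theorem Finset.sum_le_card_sub_two_of_prod_eq_neg_one {ι : Type*} [DecidableEq ι]
    (s : Finset ι) (f : ι → ℤ) (hf : ∀ i ∈ s, IsUnit (f i)) (hprod : ∏ i ∈ s, f i = -1) :
    ∑ i ∈ s, f i ≤ #s - 2 := by
  obtain ⟨i, hi, hfi⟩ : ∃ i ∈ s, f i = -1 := by
    by_contra! hne
    have : ∏ i ∈ s, f i = 1 := prod_eq_one fun i hi =>
      (Int.isUnit_eq_one_or (hf i hi)).resolve_right (hne i hi)
    omega
  have hrest : ∑ j ∈ s.erase i, f j ≤ #(s.erase i) :=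
    sum_le_card_of_forall_isUnit _ f fun j hj => hf j (mem_of_mem_erase hj)
  have hcard : (#(s.erase i) : ℤ) + 1 = #s := by exact_mod_cast card_erase_add_one hi
  rw [← add_sum_erase s f hi]
  omega

theorem Finset.prod_Ico_mul_succ_of_mul_self_eq_one {M : Type*} [CommMonoid M] (a : ℕ → M)
    (ha : ∀ i, a i * a i = 1) {k m : ℕ} (hkm : k ≤ m) :
    ∏ i ∈ Ico k m, a i * a (i + 1) = a k * a m := by
  induction m, hkm using Nat.le_induction with
  | base => simp [ha]
  | succ m hkm ih =>
    rw [prod_Ico_succ_top hkm, ih, mul_assoc, ← mul_assoc (a m), ha, one_mul]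

/-- For every integer `n ≥ 2` and every assignment
`a : {1,…,n} → {−1,+1}`, one has `Σ_{i=1}^{n−1} a(i)a(i+1) − a(n)a(1) ≤ n − 2`.
This is the classical bound of the `n`-cycle inequality evaluated on
deterministic `±1`-valued assignments. -/
theorem cycle_classical_bound (n : ℕ) (hn : 2 ≤ n) (a : ℕ → ℤ)
    (ha : ∀ i, a i = 1 ∨ a i = -1) :
    (∑ i ∈ Finset.Icc 1 (n - 1), a i * a (i + 1)) - a n * a 1 ≤ (n : ℤ) - 2 := by
  have hunit : ∀ i, IsUnit (a i) := fun i => Int.isUnit_iff.mpr (ha i)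
  have hedges : ∀ i ∈ Ico 1 n, IsUnit (a i * a (i + 1)) := fun i _ =>
    (hunit i).mul (hunit (i + 1))
  have hIcc : Icc 1 (n - 1) = Ico 1 n := by ext; simp; omega
  have hcard : (#(Ico 1 n) : ℤ) = n - 1 := by simp; omega
  have hprod : ∏ i ∈ Ico 1 n, a i * a (i + 1) = a n * a 1 := by
    rw [prod_Ico_mul_succ_of_mul_self_eq_one a (fun i => Int.isUnit_mul_self (hunit i)) (by omega),
      mul_comm]
  rw [hIcc]
  rcases Int.isUnit_eq_one_or ((hunit n).mul (hunit 1)) with hends | hends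
  · have hsum := sum_le_card_of_forall_isUnit _ _ hedges
    omega
  · have hsum := sum_le_card_sub_two_of_prod_eq_neg_one _ _ hedges (hprod.trans hends)
    omega
end

section
/- There exists a bipartite no-signaling box P(a,b|x,y) with inputs x, y ∈ {1,2,3} and outcomes a, b ∈ {−1,+1} such that ⟨A_1⟩ + ⟨A_2⟩ + ⟨B_1⟩ + ⟨B_2⟩ − ⟨A_1B_1⟩ − ⟨A_1B_2⟩ − ⟨A_1B_3⟩ − ⟨A_2B_1⟩ − ⟨A_2B_2⟩ + ⟨A_2B_3⟩ − ⟨A_3B_1⟩ + ⟨A_3B_2⟩ = 8, where ⟨A_xB_y⟩ = Σ_{a,b} ab·P(a,b|x,y), ⟨A_x⟩ = Σ_{a,b} a·P(a,b|x,y) (independent of y by no-signaling), and ⟨B_y⟩ = Σ_{a,b} b·P(a,b|x,y) (independent of x). -/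
/-- The two-element set of outcomes `{−1, +1}` (as a subtype of `ℤ`). -/
abbrev Sgn : Type := ({-1, 1} : Finset ℤ)

/-- A bipartite no-signaling box with inputs `x, y ∈ {1,2,3}` and `±1`-valued
outcomes: nonnegative, normalized, and with input-independent marginals. -/
structure NSBox2 where
  P : Fin 3 → Fin 3 → Sgn → Sgn → ℝ
  nonneg : ∀ x y a b, 0 ≤ P x y a b
  normalized : ∀ x y, ∑ a : Sgn, ∑ b : Sgn, P x y a b = 1
  nsA : ∀ x y y' a, ∑ b : Sgn, P x y a b = ∑ b : Sgn, P x y' a b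
  nsB : ∀ x x' y b, ∑ a : Sgn, P x y a b = ∑ a : Sgn, P x' y a b

/-- The correlator `⟨A_x B_y⟩ = Σ_{a,b} ab·P(a,b|x,y)`. -/
def NSBox2.corr (B : NSBox2) (x y : Fin 3) : ℝ :=
  ∑ a : Sgn, ∑ b : Sgn, (((a : ℤ) * (b : ℤ) : ℤ) : ℝ) * B.P x y a b

/-- The marginal `⟨A_x⟩ = Σ_{a,b} a·P(a,b|x,y)` (independent of `y` by no-signaling,
here evaluated at `y = 1`). -/
def NSBox2.meanA (B : NSBox2) (x : Fin 3) : ℝ :=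
  ∑ a : Sgn, ∑ b : Sgn, ((a : ℤ) : ℝ) * B.P x 0 a b

/-- The marginal `⟨B_y⟩ = Σ_{a,b} b·P(a,b|x,y)` (independent of `x` by no-signaling,
here evaluated at `x = 1`). -/
def NSBox2.meanB (B : NSBox2) (y : Fin 3) : ℝ :=
  ∑ a : Sgn, ∑ b : Sgn, ((b : ℤ) : ℝ) * B.P 0 y a b

namespace Sgn

theorem sum_eq (f : Sgn → ℝ) : ∑ a : Sgn, f a = f ⟨-1, by decide⟩ + f ⟨1, by decide⟩ := by
  rw [show (Finset.univ : Finset Sgn) = {⟨-1, by decide⟩, ⟨1, by decide⟩} by decide]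
  exact Finset.sum_pair (by decide)

theorem sum_ite_mul_eq_right (a c : Sgn) :
    ∑ b : Sgn, (if (a : ℤ) * b = c then (1 / 2 : ℝ) else 0) = 1 / 2 := by
  rcases a with ⟨a, ha⟩
  rcases c with ⟨c, hc⟩
  fin_cases ha <;> fin_cases hc <;> simp only [sum_eq] <;> norm_num

theorem sum_ite_mul_eq_left (b c : Sgn) :
    ∑ a : Sgn, (if (a : ℤ) * b = c then (1 / 2 : ℝ) else 0) = 1 / 2 := by
  simpa only [mul_comm] using sum_ite_mul_eq_right b c

theorem sum_coe : ∑ a : Sgn, ((a : ℤ) : ℝ) = 0 := by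
  simp only [sum_eq]
  norm_num

end Sgn

namespace NSBox2

/-- The box in which `ab = s x y` with certainty while each of `a`, `b` alone is uniformly
random; for a single input pair with `s = −1` this is the Popescu–Rohrlich box. -/
noncomputable def ofSigns (s : Fin 3 → Fin 3 → Sgn) : NSBox2 where
  P x y a b := if (a : ℤ) * b = s x y then 1 / 2 else 0
  nonneg x y a b := by split_ifs <;> norm_num
  normalized x y := by
    simp only [Sgn.sum_ite_mul_eq_right, Finset.sum_const, Finset.card_univ]
    norm_num
  nsA x y y' a := by rw [Sgn.sum_ite_mul_eq_right, Sgn.sum_ite_mul_eq_right]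
  nsB x x' y b := by rw [Sgn.sum_ite_mul_eq_left, Sgn.sum_ite_mul_eq_left]

variable (s : Fin 3 → Fin 3 → Sgn)

theorem meanA_ofSigns (x : Fin 3) : (ofSigns s).meanA x = 0 := by
  simp only [meanA, ofSigns, ← Finset.mul_sum, Sgn.sum_ite_mul_eq_right, ← Finset.sum_mul,
    Sgn.sum_coe, zero_mul]

theorem meanB_ofSigns (y : Fin 3) : (ofSigns s).meanB y = 0 := by
  rw [meanB, Finset.sum_comm]
  simp only [ofSigns, ← Finset.mul_sum, Sgn.sum_ite_mul_eq_left, ← Finset.sum_mul,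
    Sgn.sum_coe, zero_mul]

theorem corr_ofSigns (x y : Fin 3) : (ofSigns s).corr x y = s x y := by
  simp only [corr, ofSigns]
  rcases s x y with ⟨c, hc⟩
  fin_cases hc <;> simp only [Sgn.sum_eq] <;> norm_num

end NSBox2

/-- There is a bipartite no-signaling box attaining the value `8`
(the algebraic/no-signaling maximum) of the `I_3322` Bell expression
`⟨A₁⟩ + ⟨A₂⟩ + ⟨B₁⟩ + ⟨B₂⟩ − ⟨A₁B₁⟩ − ⟨A₁B₂⟩ − ⟨A₁B₃⟩ − ⟨A₂B₁⟩ − ⟨A₂B₂⟩ + ⟨A₂B₃⟩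
− ⟨A₃B₁⟩ + ⟨A₃B₂⟩`, whose classical bound is `4`. -/
theorem I3322_ns_value_eight :
    ∃ B : NSBox2,
      B.meanA 0 + B.meanA 1 + B.meanB 0 + B.meanB 1
        - B.corr 0 0 - B.corr 0 1 - B.corr 0 2
        - B.corr 1 0 - B.corr 1 1 + B.corr 1 2
        - B.corr 2 0 + B.corr 2 1 = 8 := by
  -- Each correlator takes the sign of its coefficient, so each of the eight terms gives `1`.
  refine ⟨NSBox2.ofSigns fun x y =>
    if (x, y) = (1, 2) ∨ (x, y) = (2, 1) then ⟨1, by decide⟩ else ⟨-1, by decide⟩, ?_⟩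
  simp only [NSBox2.meanA_ofSigns, NSBox2.meanB_ofSigns, NSBox2.corr_ofSigns]
  norm_num [Fin.ext_iff]
end

section
/- There exists a tripartite no-signaling box P(a,b,c|x,y,z) with inputs x ∈ {1,2,3}, y ∈ {1,2}, z ∈ {1} and outcomes a, b, c ∈ {−1,+1}² such that the expression ⟨A_1^{10}B_1^{10}⟩ + ⟨A_1^{01}B_2^{10}⟩ + ⟨A_1^{11}C_1^{10}⟩ + ⟨A_2^{10}B_1^{01}⟩ + ⟨A_2^{01}B_2^{01}⟩ + ⟨A_2^{11}C_1^{01}⟩ + ⟨A_3^{10}B_1^{11}⟩ + ⟨A_3^{01}B_2^{11}⟩ − ⟨A_3^{11}C_1^{11}⟩ attains its algebraic maximum 9, where for outcome pairs a = (a_0,a_1), the symbol A^{ij} denotes (a_0)^i (a_1)^j (and analogously for B and C), and each correlator ⟨A_x^{..} B_y^{..}⟩ (resp. ⟨A_x^{..} C_1^{..}⟩) is the expectation of the product of the indicated bit-combinations under the appropriate marginal of P. -/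
/-- An outcome consisting of a pair of `±1`-valued bits. -/
abbrev Pair : Type := Sgn × Sgn

/-- The bit-combination `(a₀)^i (a₁)^j` of an outcome pair `a = (a₀, a₁)`. -/
def bits (a : Pair) (i j : ℕ) : ℤ := (a.1 : ℤ) ^ i * (a.2 : ℤ) ^ j

/-- A tripartite no-signaling box with inputs `x ∈ {1,2,3}`, `y ∈ {1,2}`, `z ∈ {1}`
and outcomes that are pairs of `±1`-valued bits: nonnegative, normalized, and such
that the marginal distribution of the outcomes of any subset of the parties is
independent of the inputs of the remaining parties. -/
structure CabelloBox where
  P : Fin 3 → Fin 2 → Fin 1 → Pair → Pair → Pair → ℝ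
  nonneg : ∀ x y z a b c, 0 ≤ P x y z a b c
  normalized : ∀ x y z, ∑ a : Pair, ∑ b : Pair, ∑ c : Pair, P x y z a b c = 1
  nsAB : ∀ x y z z' a b, ∑ c : Pair, P x y z a b c = ∑ c : Pair, P x y z' a b c
  nsAC : ∀ x y y' z a c, ∑ b : Pair, P x y z a b c = ∑ b : Pair, P x y' z a b c
  nsBC : ∀ x x' y z b c, ∑ a : Pair, P x y z a b c = ∑ a : Pair, P x' y z a b c
  nsA : ∀ x y y' z z' a,
    ∑ b : Pair, ∑ c : Pair, P x y z a b c = ∑ b : Pair, ∑ c : Pair, P x y' z' a b c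
  nsB : ∀ x x' y z z' b,
    ∑ a : Pair, ∑ c : Pair, P x y z a b c = ∑ a : Pair, ∑ c : Pair, P x' y z' a b c
  nsC : ∀ x x' y y' z c,
    ∑ a : Pair, ∑ b : Pair, P x y z a b c = ∑ a : Pair, ∑ b : Pair, P x' y' z a b c

/-- The correlator `⟨A_x^{ij} B_y^{kl}⟩`: the expectation of the product of the
indicated bit-combinations of Alice's and Bob's outcomes (Charlie's input is the
unique `z = 1`). -/
def CabelloBox.corrAB (B : CabelloBox) (x : Fin 3) (y : Fin 2) (i j k l : ℕ) : ℝ :=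
  ∑ a : Pair, ∑ b : Pair, ∑ c : Pair,
    ((bits a i j * bits b k l : ℤ) : ℝ) * B.P x y 0 a b c

/-- The correlator `⟨A_x^{ij} C_1^{kl}⟩`: the expectation of the product of the
indicated bit-combinations of Alice's and Charlie's outcomes (independent of Bob's
input by no-signaling, here evaluated at `y = 1`). -/
def CabelloBox.corrAC (B : CabelloBox) (x : Fin 3) (i j k l : ℕ) : ℝ :=
  ∑ a : Pair, ∑ b : Pair, ∑ c : Pair,
    ((bits a i j * bits c k l : ℤ) : ℝ) * B.P x 0 0 a b c

/-! The box is uniform on the outcome triples on which, for inputs `(x, y)`, Alice's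
bit-combination selected by `y` equals Bob's selected by `x`, and `a₀a₁` equals Charlie's
combination selected by `x`, with a sign flip for `x = 3` (index `2`). Given `a`, each
constraint fixes one bit of `b` resp. `c`, so all marginals are uniform on their support and
independent of the other parties' inputs, while each of the nine correlators is `±1` with the
sign of its term. -/

open Finset

namespace CabelloBox

theorem corrAB_eq_of_support (B : CabelloBox) {x : Fin 3} {y : Fin 2} {i j k l : ℕ} {s : ℤ}
    (h : ∀ a b c, B.P x y 0 a b c ≠ 0 → bits a i j * bits b k l = s) :
    B.corrAB x y i j k l = s := by
  calc B.corrAB x y i j k l = ∑ a : Pair, ∑ b : Pair, ∑ c : Pair, (s : ℝ) * B.P x y 0 a b c := by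
        refine sum_congr rfl fun a _ => sum_congr rfl fun b _ => sum_congr rfl fun c _ => ?_
        by_cases hP : B.P x y 0 a b c = 0
        · simp [hP]
        · rw [h a b c hP]
    _ = s := by simp only [← mul_sum, B.normalized, mul_one]

theorem corrAC_eq_of_support (B : CabelloBox) {x : Fin 3} {i j k l : ℕ} {s : ℤ}
    (h : ∀ a b c, B.P x 0 0 a b c ≠ 0 → bits a i j * bits c k l = s) :
    B.corrAC x i j k l = s := by
  calc B.corrAC x i j k l = ∑ a : Pair, ∑ b : Pair, ∑ c : Pair, (s : ℝ) * B.P x 0 0 a b c := by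
        refine sum_congr rfl fun a _ => sum_congr rfl fun b _ => sum_congr rfl fun c _ => ?_
        by_cases hP : B.P x 0 0 a b c = 0
        · simp [hP]
        · rw [h a b c hP]
    _ = s := by simp only [← mul_sum, B.normalized, mul_one]

end CabelloBox

theorem bits_mul_self (a : Pair) (i j : ℕ) : bits a i j * bits a i j = 1 := by
  have h (u : Sgn) : (u : ℤ) * u = 1 := by
    obtain ⟨u, hu⟩ := u
    simp only [mem_insert, mem_singleton] at hu
    rcases hu with rfl | rfl <;> rfl
  calc bits a i j * bits a i j = ((a.1 : ℤ) * a.1) ^ i * ((a.2 : ℤ) * a.2) ^ j := by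
        unfold bits; ring
    _ = 1 := by rw [h, h, one_pow, one_pow, one_mul]

/-- With these tables the reduced Cabello expression reads
`∑ x y, ⟨A_x^{yExp y} B_y^{xExp x}⟩ + ∑ x, xSign x * ⟨A_x^{11} C_1^{xExp x}⟩`. -/
def yExp : Fin 2 → ℕ × ℕ := ![(1, 0), (0, 1)]

def xExp : Fin 3 → ℕ × ℕ := ![(1, 0), (0, 1), (1, 1)]

def xSign : Fin 3 → ℤ := ![1, 1, -1]

def IsPerfect (x : Fin 3) (y : Fin 2) (a b c : Pair) : Prop :=
  bits a (yExp y).1 (yExp y).2 = bits b (xExp x).1 (xExp x).2 ∧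
    bits a 1 1 = xSign x * bits c (xExp x).1 (xExp x).2

instance (x : Fin 3) (y : Fin 2) (a b c : Pair) : Decidable (IsPerfect x y a b c) := by
  unfold IsPerfect; infer_instance

def perfectWeight (x : Fin 3) (y : Fin 2) (a b c : Pair) : ℕ :=
  if IsPerfect x y a b c then 1 else 0

theorem sum_perfectWeight_alice (x : Fin 3) (y : Fin 2) (b c : Pair) :
    ∑ a : Pair, perfectWeight x y a b c = 1 := by
  revert x y b c; decide

theorem sum_perfectWeight_bob (x : Fin 3) (y : Fin 2) (a c : Pair) :
    ∑ b : Pair, perfectWeight x y a b c =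
      if bits a 1 1 = xSign x * bits c (xExp x).1 (xExp x).2 then 2 else 0 := by
  revert x y a c; decide

theorem sum_sum_perfectWeight_bob_charlie (x : Fin 3) (y : Fin 2) (a : Pair) :
    ∑ b : Pair, ∑ c : Pair, perfectWeight x y a b c = 4 := by
  revert x y a; decide

theorem sum_sum_perfectWeight_alice_charlie (x : Fin 3) (y : Fin 2) (b : Pair) :
    ∑ a : Pair, ∑ c : Pair, perfectWeight x y a b c = 4 := by
  revert x y b; decide

theorem sum_sum_perfectWeight_alice_bob (x : Fin 3) (y : Fin 2) (c : Pair) :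
    ∑ a : Pair, ∑ b : Pair, perfectWeight x y a b c = 4 := by
  revert x y c; decide

theorem sum_sum_sum_perfectWeight (x : Fin 3) (y : Fin 2) :
    ∑ a : Pair, ∑ b : Pair, ∑ c : Pair, perfectWeight x y a b c = 16 := by
  revert x y; decide

noncomputable def perfectBox : CabelloBox where
  P x y _ a b c := (perfectWeight x y a b c : ℝ) / 16
  nonneg _ _ _ _ _ _ := by positivity
  normalized x y _ := by
    simp only [← sum_div, ← Nat.cast_sum, sum_sum_sum_perfectWeight]; norm_num
  nsAB _ _ _ _ _ _ := rfl
  nsAC x y y' _ a c := by simp only [← sum_div, ← Nat.cast_sum, sum_perfectWeight_bob]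
  nsBC x x' y _ b c := by simp only [← sum_div, ← Nat.cast_sum, sum_perfectWeight_alice]
  nsA x y y' _ _ a := by
    simp only [← sum_div, ← Nat.cast_sum, sum_sum_perfectWeight_bob_charlie]
  nsB x x' y _ _ b := by
    simp only [← sum_div, ← Nat.cast_sum, sum_sum_perfectWeight_alice_charlie]
  nsC x x' y y' _ c := by
    simp only [← sum_div, ← Nat.cast_sum, sum_sum_perfectWeight_alice_bob]

theorem isPerfect_of_perfectBox_P_ne_zero {x : Fin 3} {y : Fin 2} {z : Fin 1} {a b c : Pair}
    (h : perfectBox.P x y z a b c ≠ 0) : IsPerfect x y a b c := by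
  by_contra hp
  exact h (by simp [perfectBox, perfectWeight, hp])

theorem perfectBox_corrAB (x : Fin 3) (y : Fin 2) :
    perfectBox.corrAB x y (yExp y).1 (yExp y).2 (xExp x).1 (xExp x).2 = 1 := by
  exact_mod_cast perfectBox.corrAB_eq_of_support (s := 1) fun _ b _ h => by
    rw [(isPerfect_of_perfectBox_P_ne_zero h).1, bits_mul_self]

theorem perfectBox_corrAC (x : Fin 3) :
    perfectBox.corrAC x 1 1 (xExp x).1 (xExp x).2 = xSign x :=
  perfectBox.corrAC_eq_of_support fun _ _ c h => by
    rw [(isPerfect_of_perfectBox_P_ne_zero h).2, mul_assoc, bits_mul_self, mul_one]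

/-- There is a tripartite no-signaling box (Alice: three inputs,
Bob: two inputs, Charlie: one input, four outcomes each) attaining the algebraic
maximum `9` of the reduced Cabello Bell expression
`⟨A₁^{10}B₁^{10}⟩ + ⟨A₁^{01}B₂^{10}⟩ + ⟨A₁^{11}C₁^{10}⟩ + ⟨A₂^{10}B₁^{01}⟩ +
⟨A₂^{01}B₂^{01}⟩ + ⟨A₂^{11}C₁^{01}⟩ + ⟨A₃^{10}B₁^{11}⟩ + ⟨A₃^{01}B₂^{11}⟩ −
⟨A₃^{11}C₁^{11}⟩`, whose classical bound is `7`. -/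
theorem cabello_reduced_ns_value_nine :
    ∃ B : CabelloBox,
      B.corrAB 0 0 1 0 1 0 + B.corrAB 0 1 0 1 1 0 + B.corrAC 0 1 1 1 0
        + B.corrAB 1 0 1 0 0 1 + B.corrAB 1 1 0 1 0 1 + B.corrAC 1 1 1 0 1
        + B.corrAB 2 0 1 0 1 1 + B.corrAB 2 1 0 1 1 1 - B.corrAC 2 1 1 1 1 = 9 := by
  refine ⟨perfectBox, ?_⟩
  have hAB := perfectBox_corrAB
  have hAC := perfectBox_corrAC
  norm_num [Fin.forall_fin_succ, yExp, xExp, xSign] at hAB hAC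
  linarith
end

section
/- Let d ≥ 2 and n ≥ 2 be integers and let a : {1,…,n} → ℤ be any function. Writing [x] for the unique representative of x modulo d in {0,1,…,d−1}, one has Σ_{i=1}^{n−1} [a(i) − a(i+1)] + [a(n) − a(1) − 1] ≥ d − 1. -/
/-! The residues `[x] ∈ {0, …, d - 1}` are nonnegative, and their sum is congruent mod `d` to the
sum of the underlying differences, which telescopes to `-1`. A nonnegative integer congruent to
`-1` mod `d` is at least `d - 1`. -/

theorem Int.le_add_one_of_modEq_neg_one {d S : ℤ} (hS : 0 ≤ S) (h : S ≡ -1 [ZMOD d]) :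
    d ≤ S + 1 :=
  Int.le_of_dvd (by omega) (by simpa using (Int.modEq_iff_dvd.mp h.symm))

theorem Finset.sum_Icc_sub_succ {M : Type*} [AddCommGroup M] (f : ℕ → M) {n : ℕ} (hn : 1 ≤ n) :
    ∑ i ∈ Icc 1 (n - 1), (f i - f (i + 1)) = f 1 - f n := by
  obtain ⟨m, rfl⟩ := Nat.exists_eq_add_of_le' hn
  rw [Nat.add_sub_cancel, ← Ico_add_one_right_eq_Icc, ← neg_sub, ← sum_Ico_sub f hn,
    ← sum_neg_distrib]
  simp only [neg_sub]

/-- The non-contextual (classical) bound of the `d`-outcome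
generalization of the `n`-cycle inequality: for integers `d ≥ 2`, `n ≥ 2` and any
assignment `a : {1,…,n} → ℤ`, writing `[x]` for the representative `x % d` of `x`
modulo `d` in `{0,…,d−1}`, one has
`Σ_{i=1}^{n−1} [a(i) − a(i+1)] + [a(n) − a(1) − 1] ≥ d − 1`. -/
theorem d_outcome_cycle_classical_bound (d n : ℕ) (hd : 2 ≤ d) (hn : 2 ≤ n)
    (a : ℕ → ℤ) :
    (d : ℤ) - 1 ≤
      (∑ i ∈ Finset.Icc 1 (n - 1), (a i - a (i + 1)) % (d : ℤ))
        + (a n - a 1 - 1) % (d : ℤ) := by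
  have hd₀ : (d : ℤ) ≠ 0 := by omega
  have hnonneg : 0 ≤ (∑ i ∈ Finset.Icc 1 (n - 1), (a i - a (i + 1)) % (d : ℤ))
      + (a n - a 1 - 1) % (d : ℤ) :=
    add_nonneg (Finset.sum_nonneg fun _ _ => Int.emod_nonneg _ hd₀) (Int.emod_nonneg _ hd₀)
  refine sub_le_iff_le_add.mpr (Int.le_add_one_of_modEq_neg_one hnonneg ?_)
  calc _ ≡ (∑ i ∈ Finset.Icc 1 (n - 1), (a i - a (i + 1))) + (a n - a 1 - 1) [ZMOD d] :=
        (Int.ModEq.sum fun _ _ => Int.mod_modEq _ _).add (Int.mod_modEq _ _)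
    _ = -1 := by rw [Finset.sum_Icc_sub_succ a (by omega)]; ring
end

section
/- Let G be a finite simple graph containing two cycles: C with vertices A_1,…,A_n (edges {A_i,A_{i+1}} for i = 1,…,n−1 and {A_n,A_1}) and C' with vertices A'_1,…,A'_m (edges {A'_i,A'_{i+1}} for i = 1,…,m−1 and {A'_m,A'_1}), where n, m ≥ 4, such that C and C' share at least 2 common vertices and no common edges. Suppose the multiset of the n + m cycle edges can be partitioned into two sets F_1 and F_2 such that, for j = 1, 2: the edges of F_j form a single cycle in G of length at least 4; F_j contains exactly one of the two edges {A_n,A_1} and {A'_m,A'_1}; and the subgraph of G induced on the vertices of F_j is chordal. Then every no-disturbance model on G with outcomes in {−1,+1} satisfies I(n) + I(m) ≤ n + m − 4, where I(n) = Σ_{i=1}^{n−1} ⟨A_iA_{i+1}⟩ − ⟨A_nA_1⟩ and I(m) = Σ_{i=1}^{m−1} ⟨A'_iA'_{i+1}⟩ − ⟨A'_mA'_1⟩. -/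
instance : Nonempty Sgn := ⟨⟨1, by decide⟩⟩

/-- A *no-disturbance model* with outcomes in `{−1,+1}` on a finite simple graph `G`
assigns to each clique `C` of `G` a probability distribution `p C` on the functions
`C → {−1,+1}`, such that whenever `C ⊆ D` are cliques, `p C` is the marginal of
`p D`. -/
structure NDModel {V : Type*} [Fintype V] [DecidableEq V] (G : SimpleGraph V) where
  p : (C : Finset V) → (C → Sgn) → ℝ
  nonneg : ∀ C : Finset V, G.IsClique (C : Set V) → ∀ f : C → Sgn, 0 ≤ p C f
  normalized : ∀ C : Finset V, G.IsClique (C : Set V) → ∑ f : C → Sgn, p C f = 1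
  nodisturb : ∀ C D : Finset V, ∀ hCD : C ⊆ D, G.IsClique (D : Set V) →
    ∀ g : C → Sgn,
      p C g = ∑ f : D → Sgn, if (∀ x : C, f ⟨x.1, hCD x.2⟩ = g x) then p D f else 0

/-- The correlator `⟨uv⟩ = Σ_f f(u)f(v)·p_{{u,v}}(f)` of two (adjacent) vertices. -/
def NDModel.corr {V : Type*} [Fintype V] [DecidableEq V] {G : SimpleGraph V}
    (M : NDModel G) (u v : V) : ℝ :=
  ∑ f : ({u, v} : Finset V) → Sgn,
    (((f ⟨u, by simp⟩ : ℤ) * (f ⟨v, by simp⟩ : ℤ) : ℤ) : ℝ) * M.p {u, v} f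

/-- The single-vertex mean `⟨u⟩ = Σ_f f(u)·p_{{u}}(f)`. -/
def NDModel.mean {V : Type*} [Fintype V] [DecidableEq V] {G : SimpleGraph V}
    (M : NDModel G) (u : V) : ℝ :=
  ∑ f : ({u} : Finset V) → Sgn, ((f ⟨u, by simp⟩ : ℤ) : ℝ) * M.p {u} f

variable {V : Type*} [Fintype V] [DecidableEq V]

/-- The set of endpoints of a set of edges. -/
def endpoints (F : Finset (Sym2 V)) : Finset V :=
  Finset.univ.filter (fun v => ∃ e ∈ F, v ∈ e)

/-- The property that a set `F` of edges of `G` forms a single cycle of length at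
least 4 in `G`. -/
def IsSingleCycle (G : SimpleGraph V) (F : Finset (Sym2 V)) : Prop :=
  ∃ (v : V) (w : G.Walk v v), w.IsCycle ∧ 4 ≤ w.length ∧ w.edges.toFinset = F

open SimpleGraph

section SignedEdgeSums

variable {W W' : Type*}

def signedEdgeSum (x : Sym2 W → ℝ) (σ : Sym2 W → ℤˣ) (l : List (Sym2 W)) : ℝ :=
  (l.map fun e => (σ e : ℝ) * x e).sum

def edgeSignProd (σ : Sym2 W → ℤˣ) (l : List (Sym2 W)) : ℤˣ :=
  (l.map σ).prod

lemma signedEdgeSum_append (x : Sym2 W → ℝ) (σ : Sym2 W → ℤˣ) (l₁ l₂ : List (Sym2 W)) :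
    signedEdgeSum x σ (l₁ ++ l₂) = signedEdgeSum x σ l₁ + signedEdgeSum x σ l₂ := by
  simp [signedEdgeSum]

lemma edgeSignProd_append (σ : Sym2 W → ℤˣ) (l₁ l₂ : List (Sym2 W)) :
    edgeSignProd σ (l₁ ++ l₂) = edgeSignProd σ l₁ * edgeSignProd σ l₂ := by
  simp [edgeSignProd]

lemma List.Perm.signedEdgeSum_eq {l₁ l₂ : List (Sym2 W)} (h : l₁.Perm l₂) (x : Sym2 W → ℝ)
    (σ : Sym2 W → ℤˣ) : signedEdgeSum x σ l₁ = signedEdgeSum x σ l₂ :=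
  (h.map _).sum_eq

lemma List.Perm.edgeSignProd_eq {l₁ l₂ : List (Sym2 W)} (h : l₁.Perm l₂) (σ : Sym2 W → ℤˣ) :
    edgeSignProd σ l₁ = edgeSignProd σ l₂ :=
  (h.map _).prod_eq

lemma signedEdgeSum_map (x : Sym2 W → ℝ) (σ : Sym2 W → ℤˣ) (f : W' → W)
    (l : List (Sym2 W')) :
    signedEdgeSum x σ (l.map (Sym2.map f)) = signedEdgeSum (x ∘ Sym2.map f) (σ ∘ Sym2.map f) l := by
  simp [signedEdgeSum, Function.comp_def]

lemma edgeSignProd_map (σ : Sym2 W → ℤˣ) (f : W' → W) (l : List (Sym2 W')) :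
    edgeSignProd σ (l.map (Sym2.map f)) = edgeSignProd (σ ∘ Sym2.map f) l := by
  simp [edgeSignProd]

variable [DecidableEq W]

lemma signedEdgeSum_cons_update {e : Sym2 W} {l : List (Sym2 W)} (he : e ∉ l)
    (x : Sym2 W → ℝ) (σ : Sym2 W → ℤˣ) (δ : ℤˣ) :
    signedEdgeSum x (Function.update σ e δ) (e :: l) = δ * x e + signedEdgeSum x σ l := by
  simp only [signedEdgeSum, List.map_cons, List.sum_cons, Function.update_self]
  congr 2
  exact List.map_congr_left fun e' he' => by
    rw [Function.update_of_ne (ne_of_mem_of_not_mem he' he)]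

lemma edgeSignProd_cons_update {e : Sym2 W} {l : List (Sym2 W)} (he : e ∉ l)
    (σ : Sym2 W → ℤˣ) (δ : ℤˣ) :
    edgeSignProd (Function.update σ e δ) (e :: l) = δ * edgeSignProd σ l := by
  simp only [edgeSignProd, List.map_cons, List.prod_cons, Function.update_self]
  congr 2
  exact List.map_congr_left fun e' he' => Function.update_of_ne (ne_of_mem_of_not_mem he' he) _ _

end SignedEdgeSums

section Chordal

variable {W W' : Type*} {G : SimpleGraph W}

def TriangleInequalities (G : SimpleGraph W) (x : Sym2 W → ℝ) : Prop :=
  ∀ ⦃a b c : W⦄, G.Adj a b → G.Adj b c → G.Adj c a → ∀ ε₁ ε₂ ε₃ : ℤˣ, ε₁ * ε₂ * ε₃ = -1 →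
    ε₁ * x s(a, b) + ε₂ * x s(b, c) + ε₃ * x s(c, a) ≤ 1

lemma TriangleInequalities.comap {G' : SimpleGraph W'} {x : Sym2 W → ℝ}
    (hx : TriangleInequalities G x) (f : G' →g G) :
    TriangleInequalities G' (x ∘ Sym2.map f) :=
  fun _ _ _ hab hbc hca => hx (f.map_adj hab) (f.map_adj hbc) (f.map_adj hca)

lemma TriangleInequalities.signedEdgeSum_le_one {x : Sym2 W → ℝ}
    (hx : TriangleInequalities G x) {u : W} {c : G.Walk u u} (hc : c.length = 3)
    (σ : Sym2 W → ℤˣ) (hσ : edgeSignProd σ c.edges = -1) : signedEdgeSum x σ c.edges ≤ 1 := by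
  match c, hc with
  | .cons hab (.cons hbc (.cons hca .nil)), _ =>
    simp only [signedEdgeSum, edgeSignProd, Walk.edges_cons, Walk.edges_nil, List.map_cons,
      List.map_nil, List.sum_cons, List.sum_nil, List.prod_cons, List.prod_nil, add_zero,
      mul_one] at hσ ⊢
    linarith [hx hab hbc hca _ _ _ (by rw [← hσ, mul_assoc])]

lemma SimpleGraph.IsChordal.exists_isChord (hG : G.IsChordal) {u : W} {c : G.Walk u u}
    (hc : c.IsCycle) (hlen : 4 ≤ c.length) : ∃ a b, c.IsChord s(a, b) := by
  obtain ⟨a, b, ha, hb, hab, hnot⟩ := hG u c hc hlen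
  refine ⟨a, b, Walk.isChord_sym2Mk.mpr ⟨hab, fun he => hnot ?_, ha, hb⟩⟩
  exact (c.toSubgraph.mem_edgeSet).mp ((c.mem_edges_toSubgraph).mpr he)

variable [DecidableEq W]

lemma SimpleGraph.Walk.IsCycle.exists_split_of_isChord {u a b : W}
    {c : G.Walk u u} (hc : c.IsCycle) (hab : c.IsChord s(a, b)) :
    ∃ (p : G.Walk a b) (q : G.Walk b a), p.IsPath ∧ q.IsPath ∧ s(a, b) ∉ p.edges ∧
      s(a, b) ∉ q.edges ∧ (p.edges ++ q.edges).Perm c.edges := by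
  obtain ⟨hadj, hnot, ha, hb⟩ := Walk.isChord_sym2Mk.mp hab
  set c' := c.rotate a ha
  have hperm : c'.edges.Perm c.edges := (c.rotate_edges a ha).perm
  have hb' : b ∈ c'.support := (c.mem_support_rotate_iff a ha).mpr hb
  have hspec := c'.take_spec hb'
  have hc' : c'.IsCycle := hc.rotate ha
  refine ⟨c'.takeUntil b hb', c'.dropUntil b hb', hc'.isPath_takeUntil hb',
    Walk.IsCycle.isPath_of_append_right (Walk.not_nil_of_ne hadj.ne) (by rwa [hspec]), ?_, ?_, ?_⟩
  · exact fun h => hnot (hperm.subset (c'.edges_takeUntil_subset_edges hb' h))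
  · exact fun h => hnot (hperm.subset (c'.edges_dropUntil_subset_edges hb' h))
  · rwa [← Walk.edges_append, hspec]

theorem SimpleGraph.IsChordal.signedEdgeSum_le (hG : G.IsChordal) {x : Sym2 W → ℝ}
    (hx : TriangleInequalities G x) {u : W} {c : G.Walk u u} (hc : c.IsCycle) (σ : Sym2 W → ℤˣ)
    (hσ : edgeSignProd σ c.edges = -1) :
    signedEdgeSum x σ c.edges ≤ c.length - 2 := by
  induction h : c.length using Nat.strong_induction_on generalizing u c σ with
  | _ L ih =>
  by_cases h3 : L = 3
  · subst h3
    norm_num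
    exact hx.signedEdgeSum_le_one h σ hσ
  obtain ⟨a, b, hab⟩ := hG.exists_isChord hc (by have := hc.three_le_length; omega)
  obtain ⟨p, q, hp, hq, hpab, hqab, hperm⟩ := hc.exists_split_of_isChord hab
  have hadj : G.Adj a b := (Walk.isChord_sym2Mk.mp hab).1
  have hc₁ : (Walk.cons hadj q).IsCycle := (Walk.cons_isCycle_iff q hadj).mpr ⟨hq, hqab⟩
  have hpba : s(b, a) ∉ p.edges := by rwa [Sym2.eq_swap]
  have hc₂ : (Walk.cons hadj.symm p).IsCycle := (Walk.cons_isCycle_iff p hadj.symm).mpr ⟨hp, hpba⟩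
  have hlen : p.length + q.length = L := by
    rw [← h, ← c.length_edges, ← hperm.length_eq]; simp
  have hq₃ := hc₁.three_le_length
  have hp₃ := hc₂.three_le_length
  rw [Walk.length_cons] at hq₃ hp₃
  -- the chord gets the sign making both halves odd; its two terms then cancel
  set δ := -edgeSignProd σ q.edges
  have ih₁ := ih (q.length + 1) (by omega) hc₁ (Function.update σ s(a, b) δ)
    (by rw [Walk.edges_cons, edgeSignProd_cons_update hqab]; simp [δ]) (Walk.length_cons _ _)
  have ih₂ := ih (p.length + 1) (by omega) hc₂ (Function.update σ s(b, a) (-δ))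
    (by
      rw [Walk.edges_cons, edgeSignProd_cons_update hpba, ← hσ,
        ← hperm.edgeSignProd_eq, edgeSignProd_append]
      simp [δ, mul_comm])
    (Walk.length_cons _ _)
  rw [Walk.edges_cons, signedEdgeSum_cons_update hqab] at ih₁
  rw [Walk.edges_cons, signedEdgeSum_cons_update hpba, Sym2.eq_swap] at ih₂
  rw [← hperm.signedEdgeSum_eq, signedEdgeSum_append, ← hlen]
  push_cast [Units.val_neg] at ih₁ ih₂ ⊢
  linarith

theorem SimpleGraph.IsChordal.signedEdgeSum_le_of_induce {S : Set W} (hS : (G.induce S).IsChordal)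
    {x : Sym2 W → ℝ} (hx : TriangleInequalities G x) {u : W} {c : G.Walk u u} (hc : c.IsCycle)
    (hcS : ∀ v ∈ c.support, v ∈ S) (σ : Sym2 W → ℤˣ) (hσ : edgeSignProd σ c.edges = -1) :
    signedEdgeSum x σ c.edges ≤ c.length - 2 := by
  set f := (Embedding.induce S).toHom
  have hmap : (c.induce S hcS).map f = c := c.map_induce hcS
  have hc' : (c.induce S hcS).IsCycle := by
    rwa [← Walk.isCycle_map_iff_of_injective (f := f) Subtype.val_injective, hmap]
  have := hS.signedEdgeSum_le (hx.comap f) hc' (σ ∘ Sym2.map f)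
    (by rwa [← edgeSignProd_map, ← Walk.edges_map, hmap])
  rwa [← signedEdgeSum_map, ← Walk.edges_map, ← Walk.length_map f, hmap] at this

end Chordal

lemma IsSingleCycle.sum_sub_two_mul_le {G : SimpleGraph V} {F : Finset (Sym2 V)}
    (hF : IsSingleCycle G F) (hch : (G.induce ((endpoints F : Finset V) : Set V)).IsChordal)
    {x : Sym2 V → ℝ} (hx : TriangleInequalities G x) {c : Sym2 V} (hc : c ∈ F) :
    ∑ e ∈ F, x e - 2 * x c ≤ F.card - 2 := by
  obtain ⟨v, w, hw, -, rfl⟩ := hF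
  have hnd := hw.edges_nodup
  have hsupp : ∀ y ∈ w.support, y ∈ ((endpoints w.edges.toFinset : Finset V) : Set V) := by
    intro y hy
    obtain ⟨e, he, hye⟩ := (Walk.mem_support_iff_exists_mem_edges_of_not_nil hw.not_nil).mp hy
    simpa [endpoints] using ⟨e, he, hye⟩
  set σ : Sym2 V → ℤˣ := fun e => if e = c then -1 else 1
  have hσ : edgeSignProd σ w.edges = -1 := by
    rw [edgeSignProd, ← List.prod_toFinset _ hnd, Finset.prod_ite_eq']
    simp [hc]
  have hsum : signedEdgeSum x σ w.edges = ∑ e ∈ w.edges.toFinset, x e - 2 * x c := by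
    have hterm (e : Sym2 V) : (σ e : ℝ) * x e = x e - if e = c then 2 * x e else 0 := by
      by_cases he : e = c <;> simp [σ, he]; ring
    simp_rw [signedEdgeSum, ← List.sum_toFinset _ hnd, hterm, Finset.sum_sub_distrib,
      Finset.sum_ite_eq', if_pos hc]
  have := hch.signedEdgeSum_le_of_induce hx hw hsupp σ hσ
  rw [List.toFinset_card_of_nodup hnd, Walk.length_edges]
  linarith

lemma Sgn.signed_triangle_le_one :
    ∀ (ε₁ ε₂ ε₃ : ℤˣ) (s₁ s₂ s₃ : Sgn), ε₁ * ε₂ * ε₃ = -1 →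
      (ε₁ : ℤ) * (s₁ * s₂) + ε₂ * (s₂ * s₃) + ε₃ * (s₃ * s₁) ≤ 1 := by
  decide

namespace NDModel

variable {G : SimpleGraph V} (M : NDModel G)

theorem sum_mul_p_eq_sum_restrict {C D : Finset V} (hCD : C ⊆ D) (hD : G.IsClique (D : Set V))
    (φ : (C → Sgn) → ℝ) :
    ∑ g, φ g * M.p C g = ∑ f : D → Sgn, φ (fun y => f ⟨y, hCD y.2⟩) * M.p D f := by
  simp_rw [M.nodisturb C D hCD hD, Finset.mul_sum, mul_ite, mul_zero]
  rw [Finset.sum_comm]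
  refine Finset.sum_congr rfl fun f _ => ?_
  simp_rw [← funext_iff, Finset.sum_ite_eq, Finset.mem_univ, if_true]

theorem corr_eq_sum {D : Finset V} (hD : G.IsClique (D : Set V)) {u v : V} (hu : u ∈ D)
    (hv : v ∈ D) :
    M.corr u v = ∑ f : D → Sgn, (((f ⟨u, hu⟩ : ℤ) * (f ⟨v, hv⟩ : ℤ) : ℤ) : ℝ) * M.p D f :=
  M.sum_mul_p_eq_sum_restrict (Finset.insert_subset hu (Finset.singleton_subset_iff.mpr hv)) hD _

theorem corr_comm (u v : V) : M.corr u v = M.corr v u := by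
  have key : ∀ (C : Finset V) (_ : C = {u, v}) (hu : u ∈ C) (hv : v ∈ C),
      ∑ f : C → Sgn, (((f ⟨u, hu⟩ : ℤ) * (f ⟨v, hv⟩ : ℤ) : ℤ) : ℝ) * M.p C f = M.corr u v := by
    rintro C rfl _ _
    rfl
  rw [← key {v, u} (Finset.pair_comm v u) (by simp) (by simp), corr]
  refine Finset.sum_congr rfl fun f _ => ?_
  rw [mul_comm ((f _ : Sgn) : ℤ)]

def edgeCorr : Sym2 V → ℝ :=
  Sym2.lift ⟨M.corr, M.corr_comm⟩

@[simp]
lemma edgeCorr_mk (u v : V) : M.edgeCorr s(u, v) = M.corr u v :=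
  rfl

theorem triangleInequalities : TriangleInequalities G M.edgeCorr := by
  intro a b c hab hbc hca ε₁ ε₂ ε₃ hε
  have hD : G.IsClique (({a, b, c} : Finset V) : Set V) :=
    (is3Clique_triple_iff.mpr ⟨hab, hca.symm, hbc⟩).isClique
  simp only [edgeCorr_mk]
  rw [M.corr_eq_sum hD (by simp) (by simp), M.corr_eq_sum hD (by simp) (by simp),
    M.corr_eq_sum hD (by simp) (by simp), Finset.mul_sum, Finset.mul_sum, Finset.mul_sum,
    ← Finset.sum_add_distrib, ← Finset.sum_add_distrib, ← M.normalized _ hD]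
  refine Finset.sum_le_sum fun f _ => ?_
  have hf := (Int.cast_le (R := ℝ)).mpr <| Sgn.signed_triangle_le_one ε₁ ε₂ ε₃
    (f ⟨a, by simp⟩) (f ⟨b, by simp⟩) (f ⟨c, by simp⟩) hε
  push_cast at hf ⊢
  nlinarith [mul_le_mul_of_nonneg_right hf (M.nonneg _ hD f)]

end NDModel

lemma sum_cycle_edges {W β : Type*} [DecidableEq W] [AddCommMonoid β] {A : ℕ → W} {n : ℕ}
    (hA : Set.InjOn A (Set.Iio n)) (hn : 3 ≤ n) (f : Sym2 W → β) :
    ∑ e ∈ ((Finset.range (n - 1)).image fun i => s(A i, A (i + 1))) ∪ {s(A (n - 1), A 0)}, f e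
      = ∑ i ∈ Finset.range (n - 1), f s(A i, A (i + 1)) + f s(A (n - 1), A 0) := by
  have inj {i j : ℕ} (hi : i < n) (hj : j < n) (h : A i = A j) : i = j := hA hi hj h
  rw [Finset.sum_union, Finset.sum_image, Finset.sum_singleton]
  · intro i hi j hj h
    simp only [Finset.coe_range, Set.mem_Iio] at hi hj
    rcases Sym2.eq_iff.mp h with ⟨h₁, -⟩ | ⟨h₁, h₂⟩
    · exact inj (by omega) (by omega) h₁
    · have := inj (by omega) (by omega) h₁
      have := inj (by omega) (by omega) h₂
      omega
  · simp only [Finset.disjoint_singleton_right, Finset.mem_image, Finset.mem_range, not_exists,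
      not_and]
    intro i hi h
    rcases Sym2.eq_iff.mp h with ⟨h₁, -⟩ | ⟨h₁, h₂⟩
    · have := inj (by omega) (by omega) h₁
      omega
    · have := inj (by omega) (by omega) h₁
      have := inj (by omega) (by omega) h₂
      omega

lemma card_cycle_edges {W : Type*} [DecidableEq W] {A : ℕ → W} {n : ℕ}
    (hA : Set.InjOn A (Set.Iio n)) (hn : 3 ≤ n) :
    (((Finset.range (n - 1)).image fun i => s(A i, A (i + 1))) ∪ {s(A (n - 1), A 0)}).card = n := by
  rw [Finset.card_eq_sum_ones, sum_cycle_edges hA hn, Finset.sum_const, Finset.card_range,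
    smul_eq_mul]
  omega

theorem two_cycle_monogamy_general
    (G : SimpleGraph V) (n m : ℕ) (hn : 4 ≤ n) (hm : 4 ≤ m)
    (A A' : ℕ → V)
    (hAinj : Set.InjOn A (Set.Iio n)) (hA'inj : Set.InjOn A' (Set.Iio m))
    (E1 E2 : Finset (Sym2 V))
    (hE1 : E1 = ((Finset.range (n - 1)).image fun i => s(A i, A (i + 1)))
      ∪ {s(A (n - 1), A 0)})
    (hE2 : E2 = ((Finset.range (m - 1)).image fun i => s(A' i, A' (i + 1)))
      ∪ {s(A' (m - 1), A' 0)})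
    (hnoedge : Disjoint E1 E2)
    (F1 F2 : Finset (Sym2 V))
    (hpart : F1 ∪ F2 = E1 ∪ E2) (hdisj : Disjoint F1 F2)
    (hcyc1 : IsSingleCycle G F1) (hcyc2 : IsSingleCycle G F2)
    (hcontr : (s(A (n - 1), A 0) ∈ F1 ∧ s(A' (m - 1), A' 0) ∈ F2)
      ∨ (s(A' (m - 1), A' 0) ∈ F1 ∧ s(A (n - 1), A 0) ∈ F2))
    (hchordal1 : (G.induce ((endpoints F1 : Finset V) : Set V)).IsChordal)
    (hchordal2 : (G.induce ((endpoints F2 : Finset V) : Set V)).IsChordal) :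
    ∀ M : NDModel G,
      ((∑ i ∈ Finset.range (n - 1), M.corr (A i) (A (i + 1)))
          - M.corr (A (n - 1)) (A 0))
        + ((∑ i ∈ Finset.range (m - 1), M.corr (A' i) (A' (i + 1)))
          - M.corr (A' (m - 1)) (A' 0))
      ≤ (n : ℝ) + (m : ℝ) - 4 := by
  intro M
  have hE1sum : ∑ e ∈ E1, M.edgeCorr e
      = ∑ i ∈ Finset.range (n - 1), M.corr (A i) (A (i + 1)) + M.corr (A (n - 1)) (A 0) := by
    rw [hE1]; exact sum_cycle_edges hAinj (by omega) M.edgeCorr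
  have hE2sum : ∑ e ∈ E2, M.edgeCorr e
      = ∑ i ∈ Finset.range (m - 1), M.corr (A' i) (A' (i + 1)) + M.corr (A' (m - 1)) (A' 0) := by
    rw [hE2]; exact sum_cycle_edges hA'inj (by omega) M.edgeCorr
  have hsplit : ∑ e ∈ E1, M.edgeCorr e + ∑ e ∈ E2, M.edgeCorr e
      = ∑ e ∈ F1, M.edgeCorr e + ∑ e ∈ F2, M.edgeCorr e := by
    rw [← Finset.sum_union hnoedge, ← hpart, Finset.sum_union hdisj]
  have hcard : (F1.card : ℝ) + F2.card = n + m := by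
    rw [← Nat.cast_add, ← Finset.card_union_of_disjoint hdisj, hpart,
      Finset.card_union_of_disjoint hnoedge, hE1, hE2, card_cycle_edges hAinj (by omega),
      card_cycle_edges hA'inj (by omega), Nat.cast_add]
  rcases hcontr with ⟨h₁, h₂⟩ | ⟨h₁, h₂⟩ <;>
  · have b₁ := hcyc1.sum_sub_two_mul_le hchordal1 M.triangleInequalities h₁
    have b₂ := hcyc2.sum_sub_two_mul_le hchordal2 M.triangleInequalities h₂
    simp only [NDModel.edgeCorr_mk] at b₁ b₂
    linarith

/-- monogamy of two cycle inequalities. Let `G` contain an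
`n`-cycle `A 0, …, A (n−1)` and an `m`-cycle `A' 0, …, A' (m−1)` (`n, m ≥ 4`)
sharing at least two vertices and no edges. If the `n + m` cycle edges can be
partitioned into two sets `F1`, `F2`, each forming a single cycle of length at
least 4 in `G`, each containing exactly one of the two contradiction edges
`{A (n−1), A 0}` and `{A' (m−1), A' 0}`, and each spanning a chordal induced
subgraph of `G`, then every no-disturbance model on `G` satisfies
`I(n) + I(m) ≤ n + m − 4`. -/
theorem two_cycle_monogamy
    (G : SimpleGraph V) (n m : ℕ) (hn : 4 ≤ n) (hm : 4 ≤ m)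
    (A A' : ℕ → V)
    (hAinj : Set.InjOn A (Set.Iio n)) (hA'inj : Set.InjOn A' (Set.Iio m))
    (hadjA : ∀ i < n - 1, G.Adj (A i) (A (i + 1)))
    (hadjA0 : G.Adj (A (n - 1)) (A 0))
    (hadjA' : ∀ i < m - 1, G.Adj (A' i) (A' (i + 1)))
    (hadjA'0 : G.Adj (A' (m - 1)) (A' 0))
    (E1 E2 : Finset (Sym2 V))
    (hE1 : E1 = ((Finset.range (n - 1)).image fun i => s(A i, A (i + 1)))
      ∪ {s(A (n - 1), A 0)})
    (hE2 : E2 = ((Finset.range (m - 1)).image fun i => s(A' i, A' (i + 1)))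
      ∪ {s(A' (m - 1), A' 0)})
    (hshare : 2 ≤ (((Finset.range n).image A) ∩ ((Finset.range m).image A')).card)
    (hnoedge : Disjoint E1 E2)
    (F1 F2 : Finset (Sym2 V))
    (hpart : F1 ∪ F2 = E1 ∪ E2) (hdisj : Disjoint F1 F2)
    (hcyc1 : IsSingleCycle G F1) (hcyc2 : IsSingleCycle G F2)
    (hcontr : (s(A (n - 1), A 0) ∈ F1 ∧ s(A' (m - 1), A' 0) ∈ F2)
      ∨ (s(A' (m - 1), A' 0) ∈ F1 ∧ s(A (n - 1), A 0) ∈ F2))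
    (hchordal1 : (G.induce ((endpoints F1 : Finset V) : Set V)).IsChordal)
    (hchordal2 : (G.induce ((endpoints F2 : Finset V) : Set V)).IsChordal) :
    ∀ M : NDModel G,
      ((∑ i ∈ Finset.range (n - 1), M.corr (A i) (A (i + 1)))
          - M.corr (A (n - 1)) (A 0))
        + ((∑ i ∈ Finset.range (m - 1), M.corr (A' i) (A' (i + 1)))
          - M.corr (A' (m - 1)) (A' 0))
      ≤ (n : ℝ) + (m : ℝ) - 4 :=
  two_cycle_monogamy_general G n m hn hm A A' hAinj hA'inj E1 E2 hE1 hE2 hnoedge F1 F2 hpart hdisj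
    hcyc1 hcyc2 hcontr hchordal1 hchordal2
end
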